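/- Shifted-cylinder measure lemma: Let n be a positive integer and K₁ > 1 a fixed constant. For a standard parabolic cylinder Q = Q_r(Y) = B_r(y) × (s−r², s), define the shifted cylinder Q̂ := B_r(y) × (s+r², s+K₁r²). Then for an arbitrary family 𝒜 of standard parabolic cylinders in ℝ^{n+1}, the sets E := ⋃_{Q ∈ 𝒜} Q and Ê := ⋃_{Q ∈ 𝒜} Q̂ satisfy |Ê| ≥ q₁·|E|, where q₁ := (K₁−1)/(K₁+1). -/

import Mathlib

/-!
Fix `x`: the sections of `E` and `Ê` at `x` are the unions of the intervals `(s - r², s)`, resp.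
`(s + r², s + K₁r²)`, over the cylinders whose ball contains `x`, so by Fubini it suffices to
compare these. Enlarge each `(s - r², s)` to `W = (s - r², s + K₁r²)`; the shifted interval is the
right part of `W` of proportion `q₁`. For finitely many intervals, add them in increasing order of
left endpoint: the part of the new `W` not yet covered is an interval `[m, e)`, `e` the right end
of `W`, lying to the right of all earlier intervals, and at least a fraction `q₁` of it is covered
by the new shifted interval. Inner regularity of Lebesgue measure passes from finite to arbitrary
families.
-/

open MeasureTheory ENNReal Metric Set RealInnerProductSpace

noncomputable section

/-- `n`-dimensional Euclidean space. -/
abbrev En (n : ℕ) : Type := EuclideanSpace ℝ (Fin n)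

variable {n : ℕ}

/-- Time derivative `u_t`. -/
def Dt (u : En n × ℝ → ℝ) (X : En n × ℝ) : ℝ :=
  deriv (fun t => u (X.1, t)) X.2

/-- First spatial derivative `D_i u`. -/
def Dx (u : En n × ℝ → ℝ) (i : Fin n) (X : En n × ℝ) : ℝ :=
  fderiv ℝ (fun x => u (x, X.2)) X.1 (EuclideanSpace.single i 1)

/-- Second spatial derivative `D_{ij} u`. -/
def Dxx (u : En n × ℝ → ℝ) (i j : Fin n) (X : En n × ℝ) : ℝ :=
  Dx (Dx u j) i X

/-- `u` is of class `C^{2,1}` on `Q`: `u`, `D_i u`, `D_{ij} u`, `u_t` exist and are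
continuous on `Q`. -/
structure IsC21 (u : En n × ℝ → ℝ) (Q : Set (En n × ℝ)) : Prop where
  cont : ContinuousOn u Q
  diff_t : ∀ X ∈ Q, DifferentiableAt ℝ (fun t => u (X.1, t)) X.2
  diff_x : ∀ X ∈ Q, DifferentiableAt ℝ (fun x => u (x, X.2)) X.1
  diff_xx : ∀ j : Fin n, ∀ X ∈ Q, DifferentiableAt ℝ (fun x => Dx u j (x, X.2)) X.1
  cont_t : ContinuousOn (Dt u) Q
  cont_x : ∀ i, ContinuousOn (Dx u i) Q
  cont_xx : ∀ i j, ContinuousOn (Dxx u i j) Q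

/-- Uniform parabolicity with constant `ν` on `Q`:
`ν⁻¹|ξ|² ≤ Σ a_ij ξ_i ξ_j` and `Σ a_ij² ≤ ν²`. -/
def UnifParabolic (ν : ℝ) (a : En n × ℝ → Matrix (Fin n) (Fin n) ℝ)
    (Q : Set (En n × ℝ)) : Prop :=
  ∀ X ∈ Q, (∀ ξ : Fin n → ℝ, ν⁻¹ * (∑ i, ξ i ^ 2) ≤ ∑ i, ∑ j, a X i j * ξ i * ξ j) ∧
    (∑ i, ∑ j, (a X i j) ^ 2) ≤ ν ^ 2

/-- `Lu = Σ_{ij} a_ij D_ij u + Σ_i b_i D_i u`. -/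
def Lop (a : En n × ℝ → Matrix (Fin n) (Fin n) ℝ) (b : En n × ℝ → En n)
    (u : En n × ℝ → ℝ) (X : En n × ℝ) : ℝ :=
  (∑ i, ∑ j, a X i j * Dxx u i j X) + ∑ i, b X i * Dx u i X

/-- `∫ (ess sup_t |f(x,t)|)ⁿ dx`, the `n`-th power of the `L^n_x L^∞_t` norm of `f`
over the set `Q ⊆ ℝⁿ × ℝ`. -/
def LxnLtinfPow {E : Type*} [NNNorm E] (f : En n × ℝ → E) (Q : Set (En n × ℝ)) : ℝ≥0∞ :=
  ∫⁻ x, (essSup (fun t => (‖f (x, t)‖₊ : ℝ≥0∞)) (volume.restrict {t | (x, t) ∈ Q})) ^ n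

/-- The `L^n_x L^∞_t` norm of `f` over `Q`. -/
def LxnLtinf {E : Type*} [NNNorm E] (f : En n × ℝ → E) (Q : Set (En n × ℝ)) : ℝ≥0∞ :=
  (LxnLtinfPow f Q) ^ (1 / (n : ℝ))

/-- The box `B_ρ(y) × (t₁, t₂)`. -/
def box (y : En n) (ρ t₁ t₂ : ℝ) : Set (En n × ℝ) := ball y ρ ×ˢ Ioo t₁ t₂

/-- The standard parabolic cylinder `Q_r(Y) = B_r(y) × (s - r², s)`. -/
def pcyl (Y : En n × ℝ) (r : ℝ) : Set (En n × ℝ) := box Y.1 r (Y.2 - r ^ 2) Y.2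

/-- The slanted cylinder `V_r(Y) = {(x,t) : |x - (t/s)y| < r, 0 < t < s}`. -/
def slantCyl (Y : En n × ℝ) (r : ℝ) : Set (En n × ℝ) :=
  {X | ‖X.1 - (X.2 / Y.2) • Y.1‖ < r ∧ 0 < X.2 ∧ X.2 < Y.2}

/-- Supremum of the positive part `u₊` over a set `A`. -/
def supPos (u : En n × ℝ → ℝ) (A : Set (En n × ℝ)) : ℝ :=
  sSup ((fun X => max (u X) 0) '' A)

/-- `Ω` is a Lipschitz domain with character `(rΩ, mΩ)`: at every boundary point `y`
there is a coordinate frame, encoded by the unit "vertical" direction `e`, in which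
`Ω ∩ B_{rΩ}(y)` is the region above the graph of an `mΩ`-Lipschitz function `φ`
of the tangential variables. -/
def IsLipschitzDomain (Ω : Set (En n)) (rΩ mΩ : ℝ) : Prop :=
  0 < rΩ ∧ 0 ≤ mΩ ∧
  ∀ y ∈ frontier Ω, ∃ (e : En n) (φ : En n → ℝ),
    ‖e‖ = 1 ∧ LipschitzWith (Real.toNNReal mΩ) φ ∧ φ 0 = 0 ∧
    (∀ x, x ∈ Ω ∩ ball y rΩ ↔
      dist x y < rΩ ∧ φ ((x - y) - ⟪x - y, e⟫ • e) < ⟪x - y, e⟫) ∧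
    (∀ ρ : ℝ, 0 < ρ → ρ ≤ rΩ → y + ρ • e ∈ Ω)

section IntervalUnion

variable {ι : Type*}

theorem exists_Ioo_subset_biUnion_Ioo (s : Finset ι) (a e : ι → ℝ) (x : ℝ)
    (ha : ∀ j ∈ s, a j ≤ x) :
    ∃ m, x ≤ m ∧ (∀ j ∈ s, e j ≤ m) ∧ Ioo x m ⊆ ⋃ j ∈ s, Ioo (a j) (e j) := by
  classical
  induction s using Finset.induction_on with
  | empty => exact ⟨x, le_rfl, by simp, by simp⟩
  | insert i s _ ih =>
    obtain ⟨m, hxm, hem, hcover⟩ := ih fun j hj => ha j (Finset.mem_insert_of_mem hj)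
    refine ⟨max m (e i), le_max_of_le_left hxm, ?_, ?_⟩
    · simp only [Finset.mem_insert, forall_eq_or_imp]
      exact ⟨le_max_right _ _, fun j hj => le_max_of_le_left (hem j hj)⟩
    · intro z hz
      rw [Finset.set_biUnion_insert]
      rcases lt_or_ge z m with hzm | hzm
      · exact Or.inr (hcover ⟨hz.1, hzm⟩)
      · exact Or.inl ⟨(ha i (Finset.mem_insert_self i s)).trans_lt hz.1,
          (lt_max_iff.1 hz.2).resolve_left hzm.not_gt⟩

theorem ofReal_mul_volume_biUnion_Ioo_le (s : Finset ι) (a c e : ι → ℝ) {q : ℝ}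
    (hq₀ : 0 ≤ q) (hq₁ : q ≤ 1) (h : ∀ i, q * (e i - a i) ≤ e i - c i) :
    ENNReal.ofReal q * volume (⋃ i ∈ s, Ioo (a i) (e i)) ≤
      volume (⋃ i ∈ s, Ioo (c i) (e i)) := by
  classical
  induction s using Finset.induction_on_max_value a with
  | empty => simp
  | insert i s _ ha ih =>
    obtain ⟨m, ham, hem, hcover⟩ := exists_Ioo_subset_biUnion_Ioo s a e (a i) ha
    have hnew : ENNReal.ofReal q * ENNReal.ofReal (e i - m) ≤
        ENNReal.ofReal (e i - max (c i) m) := by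
      rcases le_or_gt (e i) m with hme | hme
      · simp [ENNReal.ofReal_of_nonpos (sub_nonpos.2 hme)]
      rw [← ENNReal.ofReal_mul hq₀]
      refine ENNReal.ofReal_le_ofReal ?_
      have := h i
      rcases le_total (c i) m with hcm | hcm
      · rw [max_eq_right hcm]; nlinarith
      · rw [max_eq_left hcm]; nlinarith
    have hdisj : Disjoint (⋃ j ∈ s, Ioo (c j) (e j)) (Ioo (max (c i) m) (e i)) := by
      refine Set.disjoint_left.2 fun z hz hz' => ?_
      obtain ⟨j, hj, hzj⟩ := mem_iUnion₂.1 hz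
      linarith [hem j hj, hzj.2, le_max_right (c i) m, hz'.1]
    rw [Finset.set_biUnion_insert, Finset.set_biUnion_insert]
    calc ENNReal.ofReal q * volume (Ioo (a i) (e i) ∪ ⋃ j ∈ s, Ioo (a j) (e j))
        ≤ ENNReal.ofReal q * volume ((⋃ j ∈ s, Ioo (a j) (e j)) ∪ Ico m (e i)) := by
          gcongr ENNReal.ofReal q * volume ?_
          refine union_subset ((Ioo_subset_Ioo_union_Ico (b := m)).trans ?_) subset_union_left
          exact union_subset_union_left _ hcover
      _ ≤ ENNReal.ofReal q * (volume (⋃ j ∈ s, Ioo (a j) (e j)) + ENNReal.ofReal (e i - m)) := by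
          rw [← Real.volume_Ico]
          gcongr
          exact measure_union_le _ _
      _ ≤ volume (⋃ j ∈ s, Ioo (c j) (e j)) + ENNReal.ofReal (e i - max (c i) m) := by
          rw [mul_add]
          exact add_le_add ih hnew
      _ = volume ((⋃ j ∈ s, Ioo (c j) (e j)) ∪ Ioo (max (c i) m) (e i)) := by
          rw [measure_union hdisj measurableSet_Ioo, Real.volume_Ioo]
      _ ≤ volume (Ioo (c i) (e i) ∪ ⋃ j ∈ s, Ioo (c j) (e j)) := by
          rw [union_comm]
          gcongr
          exact le_max_left _ _

theorem ofReal_mul_volume_iUnion_Ioo_le (a c e : ι → ℝ) {q : ℝ}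
    (hq₀ : 0 ≤ q) (hq₁ : q ≤ 1) (h : ∀ i, q * (e i - a i) ≤ e i - c i) :
    ENNReal.ofReal q * volume (⋃ i, Ioo (a i) (e i)) ≤ volume (⋃ i, Ioo (c i) (e i)) := by
  rw [(isOpen_iUnion fun i => isOpen_Ioo).measure_eq_iSup_isCompact]
  simp only [ENNReal.mul_iSup]
  refine iSup₂_le fun K hKW => iSup_le fun hK => ?_
  obtain ⟨t, ht⟩ := hK.elim_finite_subcover _ (fun i => isOpen_Ioo) hKW
  calc ENNReal.ofReal q * volume K
      ≤ ENNReal.ofReal q * volume (⋃ i ∈ t, Ioo (a i) (e i)) := by gcongr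
    _ ≤ volume (⋃ i ∈ t, Ioo (c i) (e i)) := ofReal_mul_volume_biUnion_Ioo_le t a c e hq₀ hq₁ h
    _ ≤ volume (⋃ i, Ioo (c i) (e i)) :=
      measure_mono (iUnion₂_subset fun i _ => subset_iUnion (fun i => Ioo (c i) (e i)) i)

end IntervalUnion

theorem Set.mk_preimage_iUnion_prod {ι α β : Type*} (s : ι → Set α) (t : ι → Set β) (x : α) :
    Prod.mk x ⁻¹' ⋃ i, s i ×ˢ t i = ⋃ i : {i // x ∈ s i}, t i := by
  ext; simp

theorem MeasureTheory.Measure.const_mul_prod_apply_le_of_forall {α β : Type*}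
    [MeasurableSpace α] [MeasurableSpace β] {μ : Measure α} {ν : Measure β} [SFinite ν]
    {s t : Set (α × β)} (hs : MeasurableSet s) (ht : MeasurableSet t) (c : ℝ≥0∞)
    (h : ∀ x, c * ν (Prod.mk x ⁻¹' s) ≤ ν (Prod.mk x ⁻¹' t)) :
    c * μ.prod ν s ≤ μ.prod ν t := by
  rw [Measure.prod_apply hs, Measure.prod_apply ht]
  exact (lintegral_const_mul_le _ _).trans (lintegral_mono h)

theorem shifted_cylinder_measure_lemma_general
    (n : ℕ) (K₁ : ℝ) (hK₁ : 1 < K₁)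
    {ι : Type*} (Y : ι → En n × ℝ) (R : ι → ℝ) :
    ENNReal.ofReal ((K₁ - 1) / (K₁ + 1)) * volume (⋃ i, pcyl (Y i) (R i)) ≤
      volume (⋃ i, box (Y i).1 (R i) ((Y i).2 + (R i) ^ 2) ((Y i).2 + K₁ * (R i) ^ 2)) := by
  simp only [pcyl, box]
  rw [Measure.volume_eq_prod]
  refine Measure.const_mul_prod_apply_le_of_forall
    (isOpen_iUnion fun i => isOpen_ball.prod isOpen_Ioo).measurableSet
    (isOpen_iUnion fun i => isOpen_ball.prod isOpen_Ioo).measurableSet _ fun x => ?_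
  simp only [mk_preimage_iUnion_prod]
  have hK₁' : 0 < K₁ + 1 := by linarith
  calc _ ≤ ENNReal.ofReal ((K₁ - 1) / (K₁ + 1)) *
        volume (⋃ i : {i // x ∈ ball (Y i).1 (R i)},
          Ioo ((Y i).2 - R i ^ 2) ((Y i).2 + K₁ * R i ^ 2)) := by
        gcongr with i
        nlinarith [sq_nonneg (R i)]
    _ ≤ _ := by
        refine ofReal_mul_volume_iUnion_Ioo_le _ _ _ (div_nonneg (by linarith) hK₁'.le)
          ((div_le_one hK₁').2 (by linarith)) fun i => ?_
        rw [div_mul_eq_mul_div, div_le_iff₀ hK₁']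
        nlinarith

/-- **Shifted-cylinder measure lemma** (Lemma 5.2): for a cylinder
`Q = B_r(y) × (s-r², s)` the shifted cylinder is `Q̂ = B_r(y) × (s+r², s+K₁r²)`. -/
theorem shifted_cylinder_measure_lemma
    (n : ℕ) (hn : 0 < n) (K₁ : ℝ) (hK₁ : 1 < K₁)
    {ι : Type*} (Y : ι → En n × ℝ) (R : ι → ℝ) (hR : ∀ i, 0 < R i) :
    ENNReal.ofReal ((K₁ - 1) / (K₁ + 1)) * volume (⋃ i, pcyl (Y i) (R i)) ≤
      volume (⋃ i, box (Y i).1 (R i) ((Y i).2 + (R i) ^ 2) ((Y i).2 + K₁ * (R i) ^ 2)) :=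
  shifted_cylinder_measure_lemma_general n K₁ hK₁ Y R
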